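/- Let x : ℝ → ℝ be a continuously differentiable 2π-periodic function satisfying x(t+π) = x(t) for all t and ∫₀^{2π} x(t) dt = 0. Then ∫₀^{2π} x(t)² dt ≤ (1/4) ∫₀^{2π} x'(t)² dt. -/

import Mathlib

/-!
Since `x` is `π`-periodic, the inequality on `[0, 2π]` is twice the same inequality on `[0, π]`,
which is Wirtinger's inequality for an interval of length `π`, with constant `(π / 2π)² = 1/4`.
Wirtinger's inequality on `[a, b]` follows from Parseval's identity: the `n`-th Fourier coefficient
of `f'` is `2πin / (b - a)` times that of `f`, and the zero mean kills the coefficient `n = 0`.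
-/

open Real MeasureTheory Set Complex
open scoped Interval

theorem ContinuousOn.memLp_restrict_Ioc {E : Type*} [NormedAddCommGroup E] {a b : ℝ} {f : ℝ → E}
    (p : ENNReal) (hf : ContinuousOn f (Icc a b)) : MemLp f p (volume.restrict (Ioc a b)) := by
  obtain ⟨C, hC⟩ := isCompact_Icc.exists_bound_of_continuousOn hf
  refine MemLp.of_bound ((hf.mono Ioc_subset_Icc_self).aestronglyMeasurable measurableSet_Ioc) C ?_
  exact (ae_restrict_iff' measurableSet_Ioc).2
    (.of_forall fun t ht => hC t (Ioc_subset_Icc_self ht))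

theorem Function.Periodic.deriv {f : ℝ → ℝ} {c : ℝ} (hf : Function.Periodic f c) :
    Function.Periodic (deriv f) c :=
  fun t => by rw [← deriv_comp_add_const, hf.funext]

theorem Function.Periodic.intervalIntegral_zero_two_mul {g : ℝ → ℝ} {T : ℝ}
    (hg : Function.Periodic g T) (hc : Continuous g) :
    ∫ t in (0 : ℝ)..2 * T, g t = 2 * ∫ t in (0 : ℝ)..T, g t := by
  rw [two_mul, hg.intervalIntegral_add_eq_add 0 T fun _ _ => hc.intervalIntegrable _ _, zero_add,
    ← two_mul]

section FourierCoeffOn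

variable {a b : ℝ}

theorem fourierCoeffOn_zero (hab : a < b) {E : Type*} [NormedAddCommGroup E] [NormedSpace ℂ E]
    [CompleteSpace E] (f : ℝ → E) :
    fourierCoeffOn hab f 0 = (1 / (b - a)) • ∫ t in a..b, f t := by
  simp [fourierCoeffOn_eq_integral]

variable {f f' : ℝ → ℂ}

theorem fourierCoeffOn_deriv_of_eq_endpoints (hab : a < b) {n : ℤ} (hn : n ≠ 0)
    (hf : ∀ t ∈ [[a, b]], HasDerivAt f (f' t) t)
    (hf' : IntervalIntegrable f' volume a b) (hfab : f a = f b) :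
    fourierCoeffOn hab f' n = 2 * π * I * n / (b - a) * fourierCoeffOn hab f n := by
  rw [fourierCoeffOn_of_hasDerivAt hab hn hf hf', hfab, sub_self, mul_zero, zero_sub]
  have hba : ((b - a : ℝ) : ℂ) ≠ 0 := ofReal_ne_zero.2 (sub_ne_zero.2 hab.ne')
  have hπ : (π : ℂ) ≠ 0 := ofReal_ne_zero.2 pi_ne_zero
  have hn' : (n : ℂ) ≠ 0 := Int.cast_ne_zero.2 hn
  push_cast at hba ⊢
  field_simp

theorem norm_fourierCoeffOn_le_of_eq_endpoints (hab : a < b) {n : ℤ} (hn : n ≠ 0)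
    (hf : ∀ t ∈ [[a, b]], HasDerivAt f (f' t) t) (hf' : IntervalIntegrable f' volume a b)
    (hfab : f a = f b) :
    ‖fourierCoeffOn hab f n‖ ≤ (b - a) / (2 * π) * ‖fourierCoeffOn hab f' n‖ := by
  have hn1 : (1 : ℝ) ≤ |(n : ℝ)| := by exact_mod_cast Int.one_le_abs hn
  have hba : 0 < b - a := sub_pos.2 hab
  have hnorm : ‖(2 * π * I * n / (b - a) : ℂ)‖ = 2 * π * |(n : ℝ)| / (b - a) := by
    rw [norm_div, ← ofReal_sub, Complex.norm_real, Real.norm_of_nonneg hba.le]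
    simp [abs_of_pos pi_pos]
  rw [fourierCoeffOn_deriv_of_eq_endpoints hab hn hf hf' hfab, norm_mul, hnorm]
  calc ‖fourierCoeffOn hab f n‖ ≤ |(n : ℝ)| * ‖fourierCoeffOn hab f n‖ :=
        le_mul_of_one_le_left (norm_nonneg _) hn1
    _ = (b - a) / (2 * π) * (2 * π * |(n : ℝ)| / (b - a) * ‖fourierCoeffOn hab f n‖) := by
        field_simp

theorem wirtinger_inequality (hab : a < b)
    (hf : ∀ t ∈ [[a, b]], HasDerivAt f (f' t) t)
    (hf' : MemLp f' 2 (volume.restrict (Ioc a b))) (hfab : f a = f b)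
    (hmean : ∫ t in a..b, f t = 0) :
    ∫ t in a..b, ‖f t‖ ^ 2 ≤ ((b - a) / (2 * π)) ^ 2 * ∫ t in a..b, ‖f' t‖ ^ 2 := by
  have hba : 0 < b - a := sub_pos.2 hab
  have hfc : ContinuousOn f (Icc a b) := fun t ht =>
    (hf t (Icc_subset_uIcc ht)).continuousAt.continuousWithinAt
  have hf'i : IntervalIntegrable f' volume a b :=
    (intervalIntegrable_iff_integrableOn_Ioc_of_le hab.le).2 (hf'.integrable one_le_two)
  have hterm : ∀ n : ℤ, ‖fourierCoeffOn hab f n‖ ^ 2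
      ≤ ((b - a) / (2 * π)) ^ 2 * ‖fourierCoeffOn hab f' n‖ ^ 2 := by
    intro n
    rcases eq_or_ne n 0 with rfl | hn
    · rw [fourierCoeffOn_zero hab, hmean, smul_zero, norm_zero, zero_pow two_ne_zero]
      positivity
    · rw [← mul_pow]
      exact pow_le_pow_left₀ (norm_nonneg _)
        (norm_fourierCoeffOn_le_of_eq_endpoints hab hn hf hf'i hfab) 2
  have hParseval := hasSum_le hterm (hasSum_sq_fourierCoeffOn hab (hfc.memLp_restrict_Ioc 2))
    ((hasSum_sq_fourierCoeffOn hab hf').mul_left _)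
  rw [smul_eq_mul, smul_eq_mul, mul_left_comm] at hParseval
  exact (mul_le_mul_iff_right₀ (inv_pos.2 hba)).1 hParseval

theorem wirtinger_inequality_real (hab : a < b) {f f' : ℝ → ℝ}
    (hf : ∀ t ∈ [[a, b]], HasDerivAt f (f' t) t)
    (hf' : ContinuousOn f' (Icc a b)) (hfab : f a = f b) (hmean : ∫ t in a..b, f t = 0) :
    ∫ t in a..b, f t ^ 2 ≤ ((b - a) / (2 * π)) ^ 2 * ∫ t in a..b, f' t ^ 2 := by
  have key := wirtinger_inequality hab (f := fun t => (f t : ℂ))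
    (f' := fun t => (f' t : ℂ)) (fun t ht => (hf t ht).ofReal_comp)
    ((continuous_ofReal.comp_continuousOn hf').memLp_restrict_Ioc 2)
    (congrArg _ hfab) (by rw [intervalIntegral.integral_ofReal, hmean, ofReal_zero])
  simpa only [Complex.norm_real, Real.norm_eq_abs, sq_abs] using key

end FourierCoeffOn

theorem poincare_even_harmonics_general (x : ℝ → ℝ) (hx : ContDiff ℝ 1 x)
    (hAx : ∀ t, x (t + π) = x t)
    (hmean : ∫ t in (0:ℝ)..(2 * π), x t = 0) :
    ∫ t in (0:ℝ)..(2 * π), x t ^ 2 ≤ (1 / 4) * ∫ t in (0:ℝ)..(2 * π), deriv x t ^ 2 := by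
  have hxπ : Function.Periodic x π := hAx
  have hx' : Continuous (deriv x) := hx.continuous_deriv le_rfl
  have hmeanπ : ∫ t in (0 : ℝ)..π, x t = 0 := by
    rw [hxπ.intervalIntegral_zero_two_mul hx.continuous] at hmean
    linarith
  have hhalf := wirtinger_inequality_real pi_pos
    (fun t _ => (hx.differentiable one_ne_zero t).hasDerivAt) hx'.continuousOn
    (by simpa using (hAx 0).symm) hmeanπ
  have hconst : ((π - 0) / (2 * π)) ^ 2 = (1 / 4 : ℝ) := by
    field_simp
    norm_num
  rw [hconst] at hhalf
  have hdouble : ∀ g : ℝ → ℝ, Function.Periodic g π → Continuous g →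
      ∫ t in (0 : ℝ)..2 * π, g t ^ 2 = 2 * ∫ t in (0 : ℝ)..π, g t ^ 2 := fun g hg hc =>
    (hg.comp (· ^ 2)).intervalIntegral_zero_two_mul (hc.pow 2)
  rw [hdouble x hxπ hx.continuous, hdouble (deriv x) hxπ.deriv hx']
  linarith

/-- First-component Poincaré estimate: if `x : ℝ → ℝ` is `C¹`, `2π`-periodic,
`π`-periodic (`x (t + π) = x t`) and has zero mean on `[0, 2π]`, then
`∫₀^{2π} x² ≤ (1/4) ∫₀^{2π} x'²`. -/
theorem poincare_even_harmonics (x : ℝ → ℝ) (hx : ContDiff ℝ 1 x)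
    (hper : Function.Periodic x (2 * π))
    (hAx : ∀ t, x (t + π) = x t)
    (hmean : ∫ t in (0:ℝ)..(2 * π), x t = 0) :
    ∫ t in (0:ℝ)..(2 * π), x t ^ 2 ≤ (1 / 4) * ∫ t in (0:ℝ)..(2 * π), deriv x t ^ 2 :=
  poincare_even_harmonics_general x hx hAx hmean
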